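/- For integers n > 2k + t + 2, q ≥ 3, k > t + 1, t > 0 and all integers x > 2: (θ_{k-t})^x · [n-t-x choose k-t-x]_q · [t+x+1 choose t+1]_q < (θ_{k-t})^2 · [n-t-2 choose k-t-2]_q · [t+3 choose t+1]_q. -/
import Mathlib


/-- Gaussian binomial coefficient `[n choose k]_q` as a real number,
with the convention that it is `0` for `k < 0` (and for `k > n`). -/
noncomputable def gbin (q n : ℕ) (k : ℤ) : ℝ :=
  if 0 ≤ k then ∏ i ∈ Finset.range k.toNat, ((q:ℝ)^(n-i) - 1)/((q:ℝ)^(i+1) - 1) else 0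

/-- `θ_m = (q^{m+1}-1)/(q-1)`, the number of points of `PG(m,q)`. -/
noncomputable def theta (q m : ℕ) : ℝ := ((q:ℝ)^(m+1) - 1)/((q:ℝ) - 1)

lemma gbin_natCast (q n j : ℕ) :
    gbin q n (j:ℤ) = (∏ i ∈ Finset.range j, (((q:ℝ))^(n-i) - 1)) /
      (∏ i ∈ Finset.range j, (((q:ℝ))^(i+1) - 1)) := by
  simp [gbin, Finset.prod_div_distrib]

lemma gbin_neg (q n : ℕ) (k : ℤ) (h : k < 0) : gbin q n k = 0 := by
  simp [gbin, not_le.2 h]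

lemma pow_sub_one_pos {Q : ℝ} (hQ : 3 ≤ Q) {e : ℕ} (he : 1 ≤ e) : 0 < Q^e - 1 := by
  have : (3:ℝ) ≤ Q^e := le_trans hQ (le_self_pow₀ (by linarith) (by omega))
  linarith

lemma pow_sub_one_nonneg {Q : ℝ} (hQ : 3 ≤ Q) (e : ℕ) : 0 ≤ Q^e - 1 := by
  have : (1:ℝ) ≤ Q^e := one_le_pow₀ (by linarith)
  linarith

lemma pow_sub_one_ge {Q : ℝ} (hQ : 3 ≤ Q) {e : ℕ} (he : 1 ≤ e) : (2/3) * Q^e ≤ Q^e - 1 := by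
  have : (3:ℝ) ≤ Q^e := le_trans hQ (le_self_pow₀ (by linarith) (by omega))
  linarith

lemma den_pos {q : ℕ} (hq : 3 ≤ q) (j : ℕ) :
    0 < ∏ i ∈ Finset.range j, (((q:ℝ))^(i+1) - 1) := by
  have hQ : (3:ℝ) ≤ (q:ℝ) := by exact_mod_cast hq
  exact Finset.prod_pos fun i _ => pow_sub_one_pos hQ (by omega)

lemma num_nonneg {q : ℕ} (hq : 3 ≤ q) (n j : ℕ) :
    0 ≤ ∏ i ∈ Finset.range j, (((q:ℝ))^(n-i) - 1) := by
  have hQ : (3:ℝ) ≤ (q:ℝ) := by exact_mod_cast hq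
  exact Finset.prod_nonneg fun i _ => pow_sub_one_nonneg hQ _

lemma gbin_nonneg {q : ℕ} (hq : 3 ≤ q) (n : ℕ) (k : ℤ) : 0 ≤ gbin q n k := by
  rcases lt_or_ge k 0 with h | h
  · simp [gbin_neg q n k h]
  · obtain ⟨j, rfl⟩ : ∃ j : ℕ, k = (j:ℤ) := ⟨k.toNat, (Int.toNat_of_nonneg h).symm⟩
    rw [gbin_natCast]
    exact div_nonneg (num_nonneg hq n j) (den_pos hq j).le

lemma gbin_pos {q : ℕ} (hq : 3 ≤ q) {n j : ℕ} (h : j ≤ n) : 0 < gbin q n (j:ℤ) := by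
  have hQ : (3:ℝ) ≤ (q:ℝ) := by exact_mod_cast hq
  rw [gbin_natCast]
  refine div_pos (Finset.prod_pos fun i hi => pow_sub_one_pos hQ ?_) (den_pos hq j)
  have := Finset.mem_range.1 hi
  omega

lemma gbin_A {q : ℕ} (hq : 3 ≤ q) (m j : ℕ) :
    gbin q (m+1) ((j:ℤ)+1)
      = (((q:ℝ))^(m+1) - 1)/(((q:ℝ))^(j+1) - 1) * gbin q m (j:ℤ) := by
  have hQ : (3:ℝ) ≤ (q:ℝ) := by exact_mod_cast hq
  have hc : ((j:ℤ)+1) = ((j+1:ℕ):ℤ) := by push_cast; ring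
  rw [hc, gbin_natCast, gbin_natCast]
  have hnum : ∏ i ∈ Finset.range (j+1), (((q:ℝ))^(m+1-i) - 1)
      = (((q:ℝ))^(m+1) - 1) * ∏ i ∈ Finset.range j, (((q:ℝ))^(m-i) - 1) := by
    rw [Finset.prod_range_succ']
    simp only [Nat.add_sub_add_right, Nat.sub_zero]
    ring
  have hden : ∏ i ∈ Finset.range (j+1), (((q:ℝ))^(i+1) - 1)
      = (∏ i ∈ Finset.range j, (((q:ℝ))^(i+1) - 1)) * (((q:ℝ))^(j+1) - 1) :=
    Finset.prod_range_succ _ _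
  rw [hnum, hden, div_mul_div_comm,
    mul_comm (∏ i ∈ Finset.range j, (((q:ℝ))^(i+1) - 1)) (((q:ℝ))^(j+1) - 1)]

lemma gbin_B {q : ℕ} (hq : 3 ≤ q) (M jb : ℕ) :
    gbin q (M+jb+1) (jb:ℤ) * (((q:ℝ))^(M+1) - 1)
      = gbin q (M+jb) (jb:ℤ) * (((q:ℝ))^(M+jb+1) - 1) := by
  rw [gbin_natCast, gbin_natCast]
  have key : (∏ i ∈ Finset.range jb, (((q:ℝ))^(M+jb+1-i) - 1)) * (((q:ℝ))^(M+1) - 1)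
      = (∏ i ∈ Finset.range jb, (((q:ℝ))^(M+jb-i) - 1)) * (((q:ℝ))^(M+jb+1) - 1) := by
    have h1 : (∏ i ∈ Finset.range jb, (((q:ℝ))^(M+jb+1-i) - 1)) * (((q:ℝ))^(M+1) - 1)
        = ∏ i ∈ Finset.range (jb+1), (((q:ℝ))^(M+jb+1-i) - 1) := by
      rw [Finset.prod_range_succ, show M+jb+1-jb = M+1 from by omega]
    have h2 : ∏ i ∈ Finset.range (jb+1), (((q:ℝ))^(M+jb+1-i) - 1)
        = (∏ i ∈ Finset.range jb, (((q:ℝ))^(M+jb-i) - 1)) * (((q:ℝ))^(M+jb+1) - 1) := by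
      rw [Finset.prod_range_succ']
      simp only [Nat.add_sub_add_right, Nat.sub_zero]
    rw [h1, h2]
  rw [div_mul_eq_mul_div, div_mul_eq_mul_div, key]

lemma key_ineq {Q : ℝ} (hQ : 3 ≤ Q) (t x j N : ℕ) (ht : 1 ≤ t)
    (hN : 2*t + x + 2*j + 4 ≤ N) :
    2*(Q^(x+j+2)-1)*((Q^(x+t+2)-1)*(Q^(j+1)-1))
      ≤ (Q-1)*((Q^(x+1)-1)*(Q^(N+1)-1)) := by
  obtain ⟨r, rfl⟩ := Nat.exists_eq_add_of_le hN
  have hQ0 : (0:ℝ) < Q := by linarith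
  set s := 2*x + 2*j + t + 5 with hs
  have hsp : (0:ℝ) < Q^s := by positivity
  have hL : 2*(Q^(x+j+2)-1)*((Q^(x+t+2)-1)*(Q^(j+1)-1)) ≤ 2*Q^s := by
    have h1 : (Q^(x+t+2)-1)*(Q^(j+1)-1) ≤ Q^(x+t+2)*Q^(j+1) := by
      nlinarith [pow_sub_one_nonneg hQ (x+t+2), pow_sub_one_nonneg hQ (j+1)]
    have hnn : 0 ≤ (Q^(x+t+2)-1)*(Q^(j+1)-1) :=
      mul_nonneg (pow_sub_one_nonneg hQ _) (pow_sub_one_nonneg hQ _)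
    have hb : 2*(Q^(x+j+2)-1) ≤ 2*Q^(x+j+2) := by
      have := pow_sub_one_nonneg hQ (x+j+2); linarith
    have hc : (0:ℝ) ≤ 2*Q^(x+j+2) := by positivity
    calc 2*(Q^(x+j+2)-1)*((Q^(x+t+2)-1)*(Q^(j+1)-1))
        ≤ 2*Q^(x+j+2)*((Q^(x+t+2)-1)*(Q^(j+1)-1)) :=
          mul_le_mul_of_nonneg_right hb hnn
      _ ≤ 2*Q^(x+j+2)*(Q^(x+t+2)*Q^(j+1)) := mul_le_mul_of_nonneg_left h1 hc
      _ = 2*Q^s := by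
          rw [← pow_add, mul_assoc, ← pow_add,
            show x+j+2+(x+t+2+(j+1)) = s from by omega]
  have hR : 8*Q^s ≤ (Q-1)*((Q^(x+1)-1)*(Q^((2*t+x+2*j+4+r)+1)-1)) := by
    have e1 : (2/3)*Q^(x+1) ≤ Q^(x+1)-1 := pow_sub_one_ge hQ (by omega)
    have e2 : (2/3)*Q^((2*t+x+2*j+4+r)+1) ≤ Q^((2*t+x+2*j+4+r)+1)-1 :=
      pow_sub_one_ge hQ (by omega)
    have p1 : (0:ℝ) < Q^(x+1) := by positivity
    have p2 : (0:ℝ) < Q^((2*t+x+2*j+4+r)+1) := by positivity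
    have hmid : (8/9)*(Q^(x+1)*Q^((2*t+x+2*j+4+r)+1))
        ≤ (Q-1)*((Q^(x+1)-1)*(Q^((2*t+x+2*j+4+r)+1)-1)) := by
      nlinarith [mul_le_mul e1 e2 (by positivity) (by linarith [pow_sub_one_nonneg hQ (x+1)]),
        mul_pos p1 p2]
    have hsplit : Q^(x+1)*Q^((2*t+x+2*j+4+r)+1) = Q^s * Q^(t+1+r) := by
      rw [← pow_add, ← pow_add]
      congr 1
      omega
    have h9 : (9:ℝ) ≤ Q^(t+1+r) := by
      calc (9:ℝ) = 3^2 := by norm_num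
        _ ≤ (3:ℝ)^(t+1+r) := by
            apply pow_le_pow_right₀ (by norm_num) (by omega)
        _ ≤ Q^(t+1+r) := by
            apply pow_le_pow_left₀ (by norm_num) hQ
    calc 8*Q^s = (8/9)*(Q^s*9) := by ring
      _ ≤ (8/9)*(Q^s*Q^(t+1+r)) := by
          apply mul_le_mul_of_nonneg_left _ (by norm_num)
          exact mul_le_mul_of_nonneg_left h9 hsp.le
      _ = (8/9)*(Q^(x+1)*Q^((2*t+x+2*j+4+r)+1)) := by rw [hsplit]
      _ ≤ _ := hmid
  linarith

lemma step_clean {q : ℕ} (hq : 3 ≤ q) (t x j N : ℕ) (ht : 1 ≤ t) (hx : 2 ≤ x)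
    (hN : 2*t + x + 2*j + 4 ≤ N) :
    theta q (x+1+j) ^ (x+1) * gbin q N (j:ℤ) * gbin q (t+(x+1)+1) ((t:ℤ)+1)
      ≤ (1/2) * (theta q (x+1+j) ^ x * gbin q (N+1) ((j:ℤ)+1) * gbin q (t+x+1) ((t:ℤ)+1)) := by
  have hQ : (3:ℝ) ≤ (q:ℝ) := by exact_mod_cast hq
  have htheta : theta q (x+1+j) = ((q:ℝ)^(x+j+2)-1)/((q:ℝ)-1) := by
    unfold theta
    rw [show x+1+j+1 = x+j+2 from by omega]
  have hthnn : 0 ≤ theta q (x+1+j) := by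
    rw [htheta]
    exact div_nonneg (pow_sub_one_nonneg hQ _) (by linarith)
  have hcast : ((t:ℤ)+1) = ((t+1:ℕ):ℤ) := by push_cast; ring
  have hx1 : ((q:ℝ)^(x+1)-1) ≠ 0 := (pow_sub_one_pos hQ (by omega)).ne'
  have hBdiv : gbin q (t+(x+1)+1) ((t:ℤ)+1)
      = gbin q (t+x+1) ((t:ℤ)+1) * (((q:ℝ)^(x+t+2)-1)/((q:ℝ)^(x+1)-1)) := by
    rw [hcast, show t+(x+1)+1 = x+(t+1)+1 from by omega,
      show t+x+1 = x+(t+1) from by omega]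
    have hB := gbin_B hq x (t+1)
    rw [show x+t+2 = x+(t+1)+1 from by omega, ← mul_div_assoc, eq_div_iff hx1]
    exact hB
  have hAdiv : gbin q (N+1) ((j:ℤ)+1)
      = (((q:ℝ)^(N+1)-1)/((q:ℝ)^(j+1)-1)) * gbin q N (j:ℤ) := gbin_A hq N j
  have hC : 0 ≤ theta q (x+1+j) ^ x * gbin q N (j:ℤ) * gbin q (t+x+1) ((t:ℤ)+1) := by
    apply mul_nonneg (mul_nonneg (pow_nonneg hthnn x) (gbin_nonneg hq _ _))
      (gbin_nonneg hq _ _)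
  have hscalar : theta q (x+1+j) * (((q:ℝ)^(x+t+2)-1)/((q:ℝ)^(x+1)-1))
      ≤ (1/2) * (((q:ℝ)^(N+1)-1)/((q:ℝ)^(j+1)-1)) := by
    rw [htheta, div_mul_div_comm,
      show (1/2) * (((q:ℝ)^(N+1)-1)/((q:ℝ)^(j+1)-1))
        = (((q:ℝ)^(N+1)-1))/(((q:ℝ)^(j+1)-1)*2) from by
          rw [div_mul_eq_mul_div, one_mul, div_div]]
    rw [div_le_div_iff₀ (mul_pos (by linarith) (pow_sub_one_pos hQ (by omega)))
      (by have := pow_sub_one_pos hQ (show 1 ≤ j+1 by omega); linarith)]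
    have hk := key_ineq hQ t x j N ht hN
    nlinarith [hk]
  calc theta q (x+1+j) ^ (x+1) * gbin q N (j:ℤ) * gbin q (t+(x+1)+1) ((t:ℤ)+1)
      = (theta q (x+1+j) * (((q:ℝ)^(x+t+2)-1)/((q:ℝ)^(x+1)-1)))
        * (theta q (x+1+j) ^ x * gbin q N (j:ℤ) * gbin q (t+x+1) ((t:ℤ)+1)) := by
        rw [hBdiv, pow_succ]; ring
    _ ≤ ((1/2) * (((q:ℝ)^(N+1)-1)/((q:ℝ)^(j+1)-1)))
        * (theta q (x+1+j) ^ x * gbin q N (j:ℤ) * gbin q (t+x+1) ((t:ℤ)+1)) :=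
        mul_le_mul_of_nonneg_right hscalar hC
    _ = (1/2) * (theta q (x+1+j) ^ x * gbin q (N+1) ((j:ℤ)+1) * gbin q (t+x+1) ((t:ℤ)+1)) := by
        have hj1 : ((q:ℝ)^(j+1)-1) ≠ 0 := (pow_sub_one_pos hQ (by omega)).ne'
        rw [hAdiv]
        field_simp

lemma theta_nonneg {q : ℕ} (hq : 3 ≤ q) (m : ℕ) : 0 ≤ theta q m := by
  have hQ : (3:ℝ) ≤ (q:ℝ) := by exact_mod_cast hq
  exact div_nonneg (pow_sub_one_nonneg hQ _) (by linarith)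

lemma theta_pos {q : ℕ} (hq : 3 ≤ q) (m : ℕ) : 0 < theta q m := by
  have hQ : (3:ℝ) ≤ (q:ℝ) := by exact_mod_cast hq
  exact div_pos (pow_sub_one_pos hQ (by omega)) (by linarith)

theorem stmt_11 (q n k t x : ℕ) (hn : 2*k + t + 2 < n) (hq : 3 ≤ q) (hk : t + 1 < k)
    (ht : 0 < t) (hx : 2 < x) :
    (theta q (k-t))^x * gbin q (n-t-x) ((k:ℤ)-t-x) * gbin q (t+x+1) ((t:ℤ)+1)
    < (theta q (k-t))^2 * gbin q (n-t-2) ((k:ℤ)-t-2) * gbin q (t+3) ((t:ℤ)+1) := by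
  have hQ : (3:ℝ) ≤ (q:ℝ) := by exact_mod_cast hq
  -- positivity of the right-hand side
  have hf2 : 0 < (theta q (k-t))^2 * gbin q (n-t-2) ((k:ℤ)-t-2) * gbin q (t+3) ((t:ℤ)+1) := by
    have h1 : ((k:ℤ)-t-2) = ((k-t-2 : ℕ):ℤ) := by push_cast; omega
    have h2 : ((t:ℤ)+1) = ((t+1 : ℕ):ℤ) := by push_cast; ring
    rw [h1, h2]
    refine mul_pos (mul_pos (pow_pos (theta_pos hq _) 2) (gbin_pos hq ?_)) (gbin_pos hq ?_)
    · omega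
    · omega
  -- the one-step decrease
  have hstep : ∀ y:ℕ, 2 ≤ y →
      (theta q (k-t))^(y+1) * gbin q (n-t-(y+1)) ((k:ℤ)-t-((y+1:ℕ):ℤ)) * gbin q (t+(y+1)+1) ((t:ℤ)+1)
      ≤ (1/2) * ((theta q (k-t))^y * gbin q (n-t-y) ((k:ℤ)-t-(y:ℤ)) * gbin q (t+y+1) ((t:ℤ)+1)) := by
    intro y hy
    by_cases hcase : t + y + 1 ≤ k
    · set j := k - (t+y+1) with hj
      set N := n - (t+y+1) with hN'
      have h1 : k - t = y+1+j := by omega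
      have h2 : n - t - (y+1) = N := by omega
      have h3 : n - t - y = N + 1 := by omega
      have h4 : ((k:ℤ)-t-(y:ℤ)) = (j:ℤ)+1 := by omega
      have h5 : ((k:ℤ)-t-((y+1:ℕ):ℤ)) = (j:ℤ) := by push_cast; omega
      have hN : 2*t + y + 2*j + 4 ≤ N := by omega
      rw [h1, h2, h3, h4, h5]
      exact step_clean hq t y j N ht hy hN
    · have hneg : gbin q (n-t-(y+1)) ((k:ℤ)-t-((y+1:ℕ):ℤ)) = 0 :=
        gbin_neg _ _ _ (by push_cast; omega)
      rw [hneg, mul_zero, zero_mul]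
      have : 0 ≤ (theta q (k-t))^y * gbin q (n-t-y) ((k:ℤ)-t-(y:ℤ)) * gbin q (t+y+1) ((t:ℤ)+1) :=
        mul_nonneg (mul_nonneg (pow_nonneg (theta_nonneg hq _) y) (gbin_nonneg hq _ _))
          (gbin_nonneg hq _ _)
      linarith
  -- f 2 agrees with the right-hand side
  have hf2eq : (theta q (k-t))^2 * gbin q (n-t-2) ((k:ℤ)-t-((2:ℕ):ℤ)) * gbin q (t+2+1) ((t:ℤ)+1)
      = (theta q (k-t))^2 * gbin q (n-t-2) ((k:ℤ)-t-2) * gbin q (t+3) ((t:ℤ)+1) := by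
    norm_num
  have main : ∀ y:ℕ, 3 ≤ y →
      (theta q (k-t))^y * gbin q (n-t-y) ((k:ℤ)-t-(y:ℤ)) * gbin q (t+y+1) ((t:ℤ)+1)
      < (theta q (k-t))^2 * gbin q (n-t-2) ((k:ℤ)-t-2) * gbin q (t+3) ((t:ℤ)+1) := by
    intro y hy
    induction y, hy using Nat.le_induction with
    | base =>
      have h := hstep 2 le_rfl
      rw [hf2eq] at h
      calc (theta q (k-t))^(2+1) * gbin q (n-t-(2+1)) ((k:ℤ)-t-((3:ℕ):ℤ)) * gbin q (t+(2+1)+1) ((t:ℤ)+1)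
          = (theta q (k-t))^(2+1) * gbin q (n-t-(2+1)) ((k:ℤ)-t-(((2:ℕ)+1:ℕ):ℤ)) * gbin q (t+(2+1)+1) ((t:ℤ)+1) := by norm_num
        _ ≤ (1/2) * ((theta q (k-t))^2 * gbin q (n-t-2) ((k:ℤ)-t-2) * gbin q (t+3) ((t:ℤ)+1)) := h
        _ < _ := by linarith
    | succ y hy ih =>
      have h := hstep y (by omega)
      calc (theta q (k-t))^(y+1) * gbin q (n-t-(y+1)) ((k:ℤ)-t-((y+1:ℕ):ℤ)) * gbin q (t+(y+1)+1) ((t:ℤ)+1)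
          ≤ (1/2) * ((theta q (k-t))^y * gbin q (n-t-y) ((k:ℤ)-t-(y:ℤ)) * gbin q (t+y+1) ((t:ℤ)+1)) := h
        _ < _ := by linarith
  exact main x (by omega)
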